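/- arXiv:1109.5208 — 2 statements merged into one kernel-verified Lean document; each statement's English description precedes it below -/
import Mathlib

section
/- If a bijective map φ: V(D) → V(D) is an acyclic homomorphism of a finite digraph D to itself, then φ is an automorphism of D (i.e., φ maps arcs to arcs bijectively). -/
/-- Induced (restricted) arc relation on a vertex set `S`. -/
def Restrict {V : Type*} (A : V → V → Prop) (S : Set V) : V → V → Prop :=
  fun u v => u ∈ S ∧ v ∈ S ∧ A u v

/-- A digraph (arc relation) is acyclic if it has no directed cycle,
i.e. no vertex reaches itself by a nonempty directed walk. -/
def IsAcyclic {V : Type*} (A : V → V → Prop) : Prop :=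
  ∀ v, ¬ Relation.TransGen A v v

/-- The subdigraph induced by `S` is acyclic. -/
def AcyclicOn {V : Type*} (A : V → V → Prop) (S : Set V) : Prop :=
  IsAcyclic (Restrict A S)

/-- Acyclic homomorphism of digraphs. -/
def IsAcyclicHom {V W : Type*} (A : V → V → Prop) (B : W → W → Prop) (φ : V → W) : Prop :=
  (∀ w : W, AcyclicOn A (φ ⁻¹' {w})) ∧ ∀ u v, A u v → φ u = φ v ∨ B (φ u) (φ v)

/-- Automorphism of a digraph. -/
def IsDigraphAuto {W : Type*} (B : W → W → Prop) (π : W ≃ W) : Prop :=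
  ∀ u v, B u v ↔ B (π u) (π v)

/-- `D` (with arcs `A`) is uniquely `C`-colourable (`C` with arcs `B`). -/
def UniquelyColourable {V W : Type*} (A : V → V → Prop) (B : W → W → Prop) : Prop :=
  (∃ φ : V → W, IsAcyclicHom A B φ ∧ Function.Surjective φ) ∧
  ∀ φ ψ : V → W, IsAcyclicHom A B φ → IsAcyclicHom A B ψ →
    ∃ π : W ≃ W, IsDigraphAuto B π ∧ φ = ⇑π ∘ ψ

/-- Acyclic-sink set: induces an acyclic subdigraph and emits no arcs. -/
def IsAcyclicSink {V : Type*} (A : V → V → Prop) (S : Set V) : Prop :=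
  AcyclicOn A S ∧ ∀ u ∈ S, ∀ v ∉ S, ¬ A u v

/-- The circular digraph `C(k,d)` on `ℤ_k`: arc `i → j` iff `(j - i) mod k ∈ {d, …, k-1}`. -/
def CircArc (k d : ℕ) : Fin k → Fin k → Prop :=
  fun i j => d ≤ (j.val + k - i.val) % k

/-- There is a directed cycle of length `ℓ`. -/
def HasCycleOfLength {V : Type*} (A : V → V → Prop) (ℓ : ℕ) : Prop :=
  ∃ l : List V, l.length = ℓ ∧ l.Nodup ∧ List.Chain' A l ∧
    ∀ h : l ≠ [], A (l.getLast h) (l.head h)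

/-
Injectivity forces `φ` to send each arc `uv` to an arc: `φ u = φ v` would give `u = v`, a loop
inside a colour class, which is a cycle there. So `φ × φ` maps the finite arc set injectively into
itself, hence onto itself, and every arc between images comes from an arc.
-/

open Function Set

theorem IsAcyclic.not_rel_self {V : Type*} {A : V → V → Prop} (hA : IsAcyclic A) (v : V) :
    ¬ A v v :=
  fun hv => hA v (.single hv)

theorem IsAcyclicHom.not_rel_self {V W : Type*} {A : V → V → Prop} {B : W → W → Prop}
    {φ : V → W} (hφ : IsAcyclicHom A B φ) (v : V) : ¬ A v v :=
  fun hv => (hφ.1 (φ v)).not_rel_self v ⟨rfl, rfl, hv⟩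

theorem IsAcyclicHom.map_rel_of_injective {V W : Type*} {A : V → V → Prop} {B : W → W → Prop}
    {φ : V → W} (hφ : IsAcyclicHom A B φ) (hinj : Injective φ) {u v : V} (huv : A u v) :
    B (φ u) (φ v) :=
  (hφ.2 u v huv).resolve_left fun he => hφ.not_rel_self u (hinj he ▸ huv)

theorem rel_iff_rel_of_injective_of_map_rel {V : Type*} [Finite V] {A : V → V → Prop}
    {f : V → V} (hinj : Injective f) (hmap : ∀ u v, A u v → A (f u) (f v)) (u v : V) :
    A u v ↔ A (f u) (f v) := by
  let arcs : Set (V × V) := {p | A p.1 p.2}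
  have hmapsTo : MapsTo (Prod.map f f) arcs arcs := fun p hp => hmap p.1 p.2 hp
  have hbijOn : BijOn (Prod.map f f) arcs arcs :=
    (arcs.toFinite.injOn_iff_bijOn_of_mapsTo hmapsTo).mp (hinj.prodMap hinj).injOn
  refine ⟨hmap u v, fun h => ?_⟩
  obtain ⟨⟨a, b⟩, hab, heq⟩ := hbijOn.surjOn (show (f u, f v) ∈ arcs from h)
  obtain ⟨ha, hb⟩ := Prod.ext_iff.mp heq
  rwa [← hinj ha, ← hinj hb]

theorem bijective_acyclicHom_is_auto_general {V : Type*} [Fintype V] (A : V → V → Prop)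
    (φ : V → V) (hbij : Function.Bijective φ)
    (hhom : IsAcyclicHom A A φ) :
    ∀ u v, A u v ↔ A (φ u) (φ v) :=
  rel_iff_rel_of_injective_of_map_rel hbij.1 fun _ _ => hhom.map_rel_of_injective hbij.1

theorem bijective_acyclicHom_is_auto {V : Type*} [Fintype V] (A : V → V → Prop)
    (hA : Irreflexive A) (φ : V → V) (hbij : Function.Bijective φ)
    (hhom : IsAcyclicHom A A φ) :
    ∀ u v, A u v ↔ A (φ u) (φ v) :=
  bijective_acyclicHom_is_auto_general A φ hbij hhom
end

section
/- For relatively prime integers 1 ≤ d ≤ k, the digraph C(k,d) is a core: every acyclic homomorphism from C(k,d) to itself is a bijection. -/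
/-!
The windows `{c, …, c + d - 1}` of `C(k,d)` are acyclic, so their preimages under an acyclic
homomorphism `φ` are acyclic. An acyclic set of `C(k,d)` lies among the `d` vertices following
one of its sinks, so each window pulls back to at most `d` vertices. The windows cover every
vertex exactly `d` times, hence each pulls back to exactly `d` vertices; comparing the windows at
`c` and `c + 1` shows that the fibres over `c` and `c + d` have equal size. As `d` generates
`ℤ_k`, all `k` fibres have equal size, which must be `1`.
-/

open Finset Fin.NatCast Fin.CommRing

section Acyclic

variable {V W : Type*} {A : V → V → Prop} {B : W → W → Prop}

theorem acyclicOn_of_strictAnti {β : Type*} [Preorder β] {S : Set V} (h : V → β)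
    (hdec : ∀ u ∈ S, ∀ v ∈ S, A u v → h v < h u) : AcyclicOn A S := by
  intro v hv
  have hlt : Relation.TransGen (· > ·) (h v) (h v) :=
    Relation.TransGen.lift h (fun a b hab => hdec a hab.1 b hab.2.1 hab.2.2) v v hv
  rw [Relation.transGen_eq_self] at hlt
  exact lt_irrefl _ hlt

theorem AcyclicOn.exists_sink [Finite V] {S : Set V} (hS : AcyclicOn A S) (hne : S.Nonempty) :
    ∃ a ∈ S, ∀ b ∈ S, ¬ A a b := by
  let R := flip (Relation.TransGen (Restrict A S))
  have : IsTrans V R := ⟨fun _ _ _ hab hbc => hbc.trans hab⟩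
  have : Std.Irrefl R := ⟨hS⟩
  obtain ⟨a, ha, hmin⟩ := (Finite.wellFounded_of_trans_of_irrefl R).has_min S hne
  exact ⟨a, ha, fun b hb hab => hmin b hb (.single ⟨ha, hb, hab⟩)⟩

theorem IsAcyclicHom.transGen_restrict_preimage {φ : V → W} (hφ : IsAcyclicHom A B φ)
    {T : Set W} {u v : V} (huv : Relation.TransGen (Restrict A (φ ⁻¹' T)) u v) :
    (φ u = φ v ∧ Relation.TransGen (Restrict A (φ ⁻¹' {φ u})) u v) ∨
      Relation.TransGen (Restrict B T) (φ u) (φ v) := by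
  induction huv with
  | single hb =>
    obtain ⟨hu, hb, hub⟩ := hb
    rcases hφ.2 _ _ hub with heq | harc
    · exact .inl ⟨heq, .single ⟨rfl, heq.symm, hub⟩⟩
    · exact .inr (.single ⟨hu, hb, harc⟩)
  | tail _ hbc ih =>
    obtain ⟨hb, hc, hbc⟩ := hbc
    rcases hφ.2 _ _ hbc with heq | harc
    · rcases ih with ⟨heq', hwalk⟩ | hwalk
      · exact .inl ⟨heq'.trans heq, hwalk.tail ⟨heq'.symm, (heq'.trans heq).symm, hbc⟩⟩
      · exact .inr (heq ▸ hwalk)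
    · rcases ih with ⟨heq', -⟩ | hwalk
      · exact .inr (.single (heq' ▸ ⟨hb, hc, harc⟩))
      · exact .inr (hwalk.tail ⟨hb, hc, harc⟩)

theorem IsAcyclicHom.acyclicOn_preimage {φ : V → W} (hφ : IsAcyclicHom A B φ) {T : Set W}
    (hT : AcyclicOn B T) : AcyclicOn A (φ ⁻¹' T) := by
  intro v hv
  rcases hφ.transGen_restrict_preimage hv with ⟨-, hfib⟩ | himg
  · exact hφ.1 (φ v) v hfib
  · exact hT (φ v) himg

end Acyclic

section CircArc

variable {k d : ℕ}

theorem circArc_iff {i j : Fin k} : CircArc k d i j ↔ d ≤ (j - i).val := by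
  rw [CircArc, Fin.val_sub, Nat.add_comm (k - i.val), Nat.add_sub_assoc i.is_lt.le]

variable [NeZero k]

theorem sub_val_eq_iff {c w : Fin k} {t : ℕ} (ht : t < k) : (w - c).val = t ↔ w = c + t := by
  rw [← sub_eq_iff_eq_add', Fin.ext_iff, Fin.val_natCast, Nat.mod_eq_of_lt ht]

theorem sub_val_lt_of_circArc {c w w' : Fin k} (hw' : (w' - c).val < d)
    (harc : CircArc k d w w') : (w' - c).val < (w - c).val := by
  rw [circArc_iff] at harc
  have hstep : w' - c = (w - c) + (w' - w) := by ring
  have := (w' - w).is_lt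
  rw [hstep, Fin.val_add_eq_ite] at hw' ⊢
  split_ifs at hw' ⊢ <;> omega

theorem acyclicOn_circArc_window (c : Fin k) :
    AcyclicOn (CircArc k d) {w | (w - c).val < d} :=
  acyclicOn_of_strictAnti (fun w => (w - c).val) fun _ _ _ hw' harc =>
    sub_val_lt_of_circArc hw' harc

theorem card_le_of_acyclicOn_circArc {s : Finset (Fin k)} (hs : AcyclicOn (CircArc k d) s) :
    #s ≤ d := by
  obtain ⟨a, ha⟩ : ∃ a, ∀ i ∈ s, (i - a).val < d := by
    rcases s.eq_empty_or_nonempty with rfl | hne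
    · exact ⟨0, by simp⟩
    obtain ⟨a, -, hsink⟩ := hs.exists_sink (by exact_mod_cast hne)
    exact ⟨a, fun i hi => not_le.mp fun h => hsink i hi (circArc_iff.mpr h)⟩
  calc #s ≤ #(range d) :=
        card_le_card_of_injOn (fun i => (i - a).val) (fun i hi => mem_range.mpr (ha i hi))
          fun i _ j _ hij => sub_left_inj.mp (Fin.val_injective hij)
    _ = d := card_range d

theorem card_filter_sub_val_lt {V : Type*} [Fintype V] (φ : V → Fin k) (hdk : d ≤ k)
    (c : Fin k) : #{i | (φ i - c).val < d} = ∑ t ∈ range d, #{i | φ i = c + t} := by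
  rw [card_eq_sum_card_fiberwise (f := fun i => (φ i - c).val) (t := range d)
    fun i hi => mem_range.mpr (mem_filter.mp hi).2]
  refine sum_congr rfl fun t ht => congrArg card (Finset.ext fun i => ?_)
  have htd := mem_range.mp ht
  simp only [mem_filter, mem_univ, true_and]
  rw [← sub_val_eq_iff (htd.trans_le hdk)]
  exact ⟨And.right, fun h => ⟨h ▸ htd, h⟩⟩

end CircArc

theorem Fin.exists_natCast_mul_eq_of_coprime {k d : ℕ} [NeZero k] (hcop : k.Coprime d)
    (e : Fin k) : ∃ m : ℕ, (m : Fin k) * d = e := by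
  obtain ⟨m, -, hm⟩ := Nat.exists_mul_mod_eq_of_coprime e.val hcop.symm (NeZero.ne k)
  refine ⟨m, Fin.ext ?_⟩
  rw [← Nat.cast_mul, Fin.val_natCast, Nat.mul_comm, hm, Nat.mod_eq_of_lt e.is_lt]

section WindowSums

variable {k d : ℕ} [NeZero k] {f : Fin k → ℕ}

theorem sum_sum_range_add_eq_mul : ∑ c, ∑ t ∈ range d, f (c + t) = d * ∑ c, f c := by
  rw [sum_comm, sum_congr rfl fun (t : ℕ) _ => Fintype.sum_equiv (Equiv.addRight (t : Fin k))
    (fun c => f (c + t)) f fun _ => rfl, sum_const, card_range, smul_eq_mul]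

theorem periodic_of_sum_range_add_eq {s : ℕ} (h : ∀ c, ∑ t ∈ range d, f (c + t) = s) :
    Function.Periodic f d := by
  intro c
  have hshift : ∑ t ∈ range d, f (c + (t + 1 : ℕ)) = ∑ t ∈ range d, f (c + 1 + t) :=
    sum_congr rfl fun t _ => by push_cast; ring_nf
  have hfront := sum_range_succ' (fun t : ℕ => f (c + t)) d
  have hback := sum_range_succ (fun t : ℕ => f (c + t)) d
  simp only [Nat.cast_zero, add_zero, hshift, h] at hfront hback
  omega

theorem eq_one_of_sum_range_add_le (hcop : k.Coprime d) (hsum : ∑ c, f c = k)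
    (hwin : ∀ c, ∑ t ∈ range d, f (c + t) ≤ d) (c : Fin k) : f c = 1 := by
  have hwin_eq : ∀ c, ∑ t ∈ range d, f (c + t) = d := by
    have htotal : ∑ c, ∑ t ∈ range d, f (c + t) = ∑ _c : Fin k, d := by
      rw [sum_sum_range_add_eq_mul, hsum, sum_const, card_univ, Fintype.card_fin, smul_eq_mul,
        mul_comm]
    exact fun c => (sum_eq_sum_iff_of_le fun c _ => hwin c).mp htotal c (mem_univ c)
  have hconst : ∀ c, f c = f 0 := fun c => by
    obtain ⟨m, hm⟩ := Fin.exists_natCast_mul_eq_of_coprime hcop c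
    simpa [hm] using (periodic_of_sum_range_add_eq hwin_eq).nat_mul m 0
  have hk : k * f 0 = k * 1 :=
    calc k * f 0 = ∑ _c : Fin k, f 0 := by simp
      _ = ∑ c, f c := sum_congr rfl fun c _ => (hconst c).symm
      _ = k * 1 := by rw [hsum, mul_one]
  exact (hconst c).trans (Nat.eq_of_mul_eq_mul_left (NeZero.pos k) hk)

end WindowSums

theorem circ_core_of_coprime_general (k d : ℕ) (hk : d ≤ k)
    (hcop : Nat.Coprime k d) :
    ∀ φ : Fin k → Fin k, IsAcyclicHom (CircArc k d) (CircArc k d) φ →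
      Function.Bijective φ := by
  intro φ hφ
  have : NeZero k := ⟨by rintro rfl; simp_all⟩
  have hwin (c : Fin k) : ∑ t ∈ range d, #{i | φ i = c + t} ≤ d := by
    rw [← card_filter_sub_val_lt φ hk c]
    refine card_le_of_acyclicOn_circArc ?_
    simpa using hφ.acyclicOn_preimage (acyclicOn_circArc_window c)
  have hsum : ∑ c, #{i | φ i = c} = k := by
    simpa using (card_eq_sum_card_fiberwise (f := φ) (s := univ) fun i _ => mem_univ (φ i)).symm
  have hfib := eq_one_of_sum_range_add_le hcop hsum hwin
  refine Finite.injective_iff_bijective.mp fun i j hij => ?_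
  exact card_le_one.mp (hfib (φ i)).le i (by simp) j (by simp [hij])

theorem circ_core_of_coprime (k d : ℕ) (hd : 1 ≤ d) (hk : d ≤ k)
    (hcop : Nat.Coprime k d) :
    ∀ φ : Fin k → Fin k, IsAcyclicHom (CircArc k d) (CircArc k d) φ →
      Function.Bijective φ :=
  circ_core_of_coprime_general k d hk hcop
end
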